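/- In the free group on generators a and b, for any natural number v and integer u, the longitude word a^{-(2u+3(3v+2)+1)} · ((ba)^v·b^{u+1})² · (ba)^v·b · a commutes with a in the one-relator quotient ⟨a, b | (ba)^{v+1}·a·(ba)^{-(v+1)}·b^{-(u+1)}·(ba)^{-v}·a·(ba)^{v}·b^{u}⟩. -/
import Mathlib


/-- The relator `(ba)^{v+1}·a·(ba)^{-(v+1)}·b^{-(u+1)}·(ba)^{-v}·a·(ba)^{v}·b^{u}`
on generators `a = of 0`, `b = of 1`. -/
def knotRel (v : ℕ) (u : ℤ) : FreeGroup (Fin 2) :=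
  let a := FreeGroup.of (0 : Fin 2); let b := FreeGroup.of (1 : Fin 2)
  (b * a) ^ (v + 1) * a * ((b * a) ^ (v + 1))⁻¹ * (b ^ (u + 1))⁻¹ *
    ((b * a) ^ v)⁻¹ * a * (b * a) ^ v * b ^ u

lemma key {H : Type*} [Group H] (A B : H) (v : ℕ) (u : ℤ)
    (h : (B*A)^(v+1) * A * ((B*A)^(v+1))⁻¹ * (B^(u+1))⁻¹ * ((B*A)^v)⁻¹ * A * (B*A)^v * B^u = 1) :
    ((B*A)^v * B^(u+1))^2 * (B*A)^v * B * A * A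
      = A * (((B*A)^v * B^(u+1))^2 * (B*A)^v * B * A) := by
  rw [pow_succ] at h
  -- h : (B*A)^v*(B*A) * A * ((B*A)^v*(B*A))⁻¹ * (B^(u+1))⁻¹ * ((B*A)^v)⁻¹ * A * (B*A)^v * B^u = 1
  have sc1 : SemiconjBy B (A*B) (B*A) := by show B*(A*B) = (B*A)*B; group
  have sc2 : SemiconjBy A (B*A) (A*B) := by show A*(B*A) = (A*B)*A; group
  have sc1vi := (sc1.pow_right v).inv_right
  have sc3 := ((sc2.pow_right v).inv_right).inv_symm_left
  have h3 : ((B*A)^v)⁻¹ * A⁻¹ * (B*A)^v = A⁻¹ * B⁻¹ * ((B*A)^v)⁻¹ * B * (B*A)^v := by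
    symm
    calc A⁻¹ * B⁻¹ * ((B*A)^v)⁻¹ * B * (B*A)^v
        = A⁻¹ * B⁻¹ * (((B*A)^v)⁻¹ * B) * (B*A)^v := by group
      _ = A⁻¹ * B⁻¹ * (B * ((A*B)^v)⁻¹) * (B*A)^v := by rw [← sc1vi.eq]
      _ = (A⁻¹ * ((A*B)^v)⁻¹) * (B*A)^v := by group
      _ = (((B*A)^v)⁻¹ * A⁻¹) * (B*A)^v := by rw [sc3.eq]
      _ = ((B*A)^v)⁻¹ * A⁻¹ * (B*A)^v := by group
  have h1 : (B*A)^v*(B*A) * A * ((B*A)^v*(B*A))⁻¹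
      = B^(-u) * ((B*A)^v)⁻¹ * A⁻¹ * (B*A)^v * B^(u+1) := by
    have e : (B*A)^v*(B*A) * A * ((B*A)^v*(B*A))⁻¹
        = ((B*A)^v*(B*A) * A * ((B*A)^v*(B*A))⁻¹ * (B^(u+1))⁻¹ * ((B*A)^v)⁻¹ * A * (B*A)^v * B^u)
          * (B^(-u) * ((B*A)^v)⁻¹ * A⁻¹ * (B*A)^v * B^(u+1)) := by group
    rw [h, one_mul] at e
    exact e
  have h2 : A * (B*A)^v
      = (B*A)^v * B^(u+1) * ((B*A)^v*(B*A)) * A⁻¹ * ((B*A)^v*(B*A))⁻¹ * B^(-u) := by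
    have e : A * (B*A)^v
        = (A * (B*A)^v * B^u)
          * ((B*A)^v*(B*A) * A * ((B*A)^v*(B*A))⁻¹ * (B^(u+1))⁻¹ * ((B*A)^v)⁻¹ * A * (B*A)^v * B^u)
          * (A * (B*A)^v * B^u)⁻¹
          * ((B*A)^v * B^(u+1) * ((B*A)^v*(B*A)) * A⁻¹ * ((B*A)^v*(B*A))⁻¹ * B^(-u)) := by group
    rw [h, mul_one] at e
    rw [e]; group
  calc ((B*A)^v * B^(u+1))^2 * (B*A)^v * B * A * A
      = ((B*A)^v * B^(u+1))^2 * ((B*A)^v*(B*A) * A * ((B*A)^v*(B*A))⁻¹) * ((B*A)^v*(B*A)) := by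
        group
    _ = ((B*A)^v * B^(u+1))^2 * (B^(-u) * ((B*A)^v)⁻¹ * A⁻¹ * (B*A)^v * B^(u+1))
          * ((B*A)^v*(B*A)) := by rw [h1]
    _ = (B*A)^v * B^(u+1) * (B*A)^v * B * (((B*A)^v)⁻¹ * A⁻¹ * (B*A)^v)
          * B^(u+1) * (B*A)^v * B * A := by rw [pow_two]; group
    _ = (B*A)^v * B^(u+1) * (B*A)^v * B * (A⁻¹ * B⁻¹ * ((B*A)^v)⁻¹ * B * (B*A)^v)
          * B^(u+1) * (B*A)^v * B * A := by rw [h3]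
    _ = ((B*A)^v * B^(u+1) * ((B*A)^v*(B*A)) * A⁻¹ * ((B*A)^v*(B*A))⁻¹ * B^(-u))
          * (B^(u+1) * (B*A)^v * B^(u+1) * (B*A)^v * B * A) := by group
    _ = (A * (B*A)^v) * (B^(u+1) * (B*A)^v * B^(u+1) * (B*A)^v * B * A) := by rw [← h2]
    _ = A * (((B*A)^v * B^(u+1))^2 * (B*A)^v * B * A) := by rw [pow_two]; group

theorem stmt_12 (v : ℕ) (u : ℤ) :
    let G := PresentedGroup ({knotRel v u} : Set (FreeGroup (Fin 2)))
    let a : G := PresentedGroup.of 0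
    let b : G := PresentedGroup.of 1
    Commute
      (a ^ (-(2 * u + 3 * (3 * (v : ℤ) + 2) + 1)) *
        ((b * a) ^ v * b ^ (u + 1)) ^ 2 * (b * a) ^ v * b * a) a := by
  intro G a b
  have hone : (PresentedGroup.mk {knotRel v u} (knotRel v u) : G) = 1 := by
    apply (QuotientGroup.eq_one_iff _).mpr
    exact Subgroup.subset_normalClosure (Set.mem_singleton _)
  have hRel : (b*a)^(v+1) * a * ((b*a)^(v+1))⁻¹ * (b^(u+1))⁻¹ * ((b*a)^v)⁻¹ * a * (b*a)^v * b^u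
      = 1 := by
    rw [← hone]
    simp only [knotRel, map_mul, map_pow, map_zpow, map_inv]
    rfl
  have hW := key a b v u hRel
  show (a ^ (-(2 * u + 3 * (3 * (v : ℤ) + 2) + 1)) *
        ((b * a) ^ v * b ^ (u + 1)) ^ 2 * (b * a) ^ v * b * a) * a
      = a * (a ^ (-(2 * u + 3 * (3 * (v : ℤ) + 2) + 1)) *
        ((b * a) ^ v * b ^ (u + 1)) ^ 2 * (b * a) ^ v * b * a)
  calc (a ^ (-(2 * u + 3 * (3 * (v : ℤ) + 2) + 1)) *
        ((b * a) ^ v * b ^ (u + 1)) ^ 2 * (b * a) ^ v * b * a) * a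
      = a ^ (-(2 * u + 3 * (3 * (v : ℤ) + 2) + 1)) *
        (((b * a) ^ v * b ^ (u + 1)) ^ 2 * (b * a) ^ v * b * a * a) := by group
    _ = a ^ (-(2 * u + 3 * (3 * (v : ℤ) + 2) + 1)) *
        (a * (((b * a) ^ v * b ^ (u + 1)) ^ 2 * (b * a) ^ v * b * a)) := by rw [hW]
    _ = a * (a ^ (-(2 * u + 3 * (3 * (v : ℤ) + 2) + 1)) *
        ((b * a) ^ v * b ^ (u + 1)) ^ 2 * (b * a) ^ v * b * a) := by group
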